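/- (Validity of the tree symmetry-breaking inequalities.) In an instance of the tree BPCCSP admitting at least one feasible tree, there exists an optimal tree T* with the following property: for every three distinct visited vertices v, w, k ∈ V(T*) such that the three edges {v, w}, {v, k}, {w, k} all belong to E and ℓ({v, w}) > ℓ({v, k}) and ℓ({v, w}) > ℓ({w, k}), the edge {v, w} does not belong to T*. -/

import Mathlib

/-!
Among the optimal trees take one, `T`, of minimum cost. Suppose `T` used the longest edge `vw`
of a triangle `vwk` whose vertices it visits. Deleting `vw` splits `T` into two components and
`k` lies in one of them, say in that of `w`. Then `T - vw + vk` is again a tree, it visits the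
same vertices and hence collects the same prize, and it is strictly cheaper, contradicting the
choice of `T`. The other case is symmetric, with `wk` in place of `vk`.
-/

variable {V : Type*} [Fintype V] [DecidableEq V]

/-- The set of endpoints of the edges of an edge set `T` (the vertices "visited" by `T`). -/
def edgeVerts (T : Finset (Sym2 V)) : Finset V :=
  Finset.univ.filter (fun v => ∃ e ∈ T, v ∈ e)

/-- Two vertices are connected in an edge set `T` if there is a path between them
using only edges of `T`. -/
def ConnIn (T : Finset (Sym2 V)) (u w : V) : Prop :=
  (SimpleGraph.fromEdgeSet (↑T : Set (Sym2 V))).Reachable u w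

/-- A tree subgraph of `G` is a nonempty edge set `T ⊆ E(G)` whose induced subgraph is
connected and acyclic. -/
def IsTreeSubgraph (G : SimpleGraph V) (T : Finset (Sym2 V)) : Prop :=
  (↑T : Set (Sym2 V)) ⊆ G.edgeSet ∧ T.Nonempty ∧
  (∀ u ∈ edgeVerts T, ∀ w ∈ edgeVerts T, ConnIn T u w) ∧
  (SimpleGraph.fromEdgeSet (↑T : Set (Sym2 V))).IsAcyclic
/-- An instance of a budgeted prize-collecting covering subgraph problem: a finite simple
graph with a depot, nonnegative edge costs, a positive budget, nonnegative vertex prizes,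
neighbourhoods, nonnegative coverage prizes, and coverage capacities. -/
structure BPCCSPInstance (V : Type*) [Fintype V] [DecidableEq V] where
  G : SimpleGraph V
  depot : V
  len : Sym2 V → ℝ
  len_nonneg : ∀ e ∈ G.edgeSet, 0 ≤ len e
  budget : ℝ
  budget_pos : 0 < budget
  prize : V → ℝ
  prize_nonneg : ∀ v, 0 ≤ prize v
  nbhd : V → Finset V
  nbhd_not_self : ∀ v, v ∉ nbhd v
  covPrize : V → V → ℝ
  covPrize_nonneg : ∀ v w, 0 ≤ covPrize v w
  cap : V → ℕ

/-- A coverage assignment for a visited set `S`: a partial map `σ` from `V ∖ S` to `S`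
such that `σ v ∈ N_v ∩ S` whenever defined, and every `w ∈ S` has at most `c_w` preimages. -/
def IsCoverAssign (I : BPCCSPInstance V) (S : Finset V) (σ : V → Option V) : Prop :=
  (∀ v w, σ v = some w → v ∉ S ∧ w ∈ S ∧ w ∈ I.nbhd v) ∧
  (∀ w ∈ S, (Finset.univ.filter (fun v => σ v = some w)).card ≤ I.cap w)

/-- The value of a coverage assignment: the sum of `q_{v, σ(v)}` over all `v` where `σ` is
defined. -/
def assignValue (I : BPCCSPInstance V) (σ : V → Option V) : ℝ :=
  ∑ v, Option.elim (σ v) 0 (fun w => I.covPrize v w)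

/-- The collected prize of a visited set `S`: the sum of the prizes of the vertices of
`S ∖ {depot}` plus the maximum value of a coverage assignment for `S`. -/
noncomputable def collectedPrize (I : BPCCSPInstance V) (S : Finset V) : ℝ :=
  (∑ v ∈ S.erase I.depot, I.prize v) +
    sSup {x : ℝ | ∃ σ, IsCoverAssign I S σ ∧ x = assignValue I σ}

/-- A tree is feasible if it visits the depot and its cost does not exceed the budget. -/
def IsFeasibleTree (I : BPCCSPInstance V) (T : Finset (Sym2 V)) : Prop :=
  IsTreeSubgraph I.G T ∧ I.depot ∈ edgeVerts T ∧ (∑ e ∈ T, I.len e) ≤ I.budget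

/-- A tree is optimal if it is feasible and its collected prize is maximal among all
feasible trees. -/
def IsOptimalTree (I : BPCCSPInstance V) (T : Finset (Sym2 V)) : Prop :=
  IsFeasibleTree I T ∧
    ∀ T' : Finset (Sym2 V), IsFeasibleTree I T' →
      collectedPrize I (edgeVerts T') ≤ collectedPrize I (edgeVerts T)


namespace SimpleGraph

variable {α : Type*} {G H : SimpleGraph α} {a v w k : α}

theorem reachable_edge (u v : α) : (edge u v).Reachable u v := by
  by_cases huv : u = v
  · exact huv ▸ .rfl
  · exact Adj.reachable ((edge_adj u v u v).mpr ⟨Or.inl ⟨rfl, rfl⟩, huv⟩)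

theorem reachable_le_of_adj_le_reachable (h : G.Adj ≤ H.Reachable) :
    G.Reachable ≤ H.Reachable := by
  simp only [reachable_eq_reflTransGen] at h ⊢
  exact Relation.reflTransGen_closed h

theorem Reachable.deleteEdges_or (h : G.Reachable a v) (w : α) :
    (G.deleteEdges {s(v, w)}).Reachable a v ∨ (G.deleteEdges {s(v, w)}).Reachable a w := by
  rw [reachable_iff_reflTransGen] at h
  induction h using Relation.ReflTransGen.head_induction_on with
  | refl => exact Or.inl .rfl
  | @head a b hab _ ih =>
    by_cases he : s(a, b) = s(v, w)
    · rcases Sym2.eq_iff.mp he with ⟨rfl, -⟩ | ⟨rfl, -⟩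
      exacts [Or.inl .rfl, Or.inr .rfl]
    · have hab' : (G.deleteEdges {s(v, w)}).Adj a b := by simpa [he] using hab
      exact ih.imp hab'.reachable.trans hab'.reachable.trans

theorem IsAcyclic.not_reachable_deleteEdges (hG : G.IsAcyclic) (hvw : G.Adj v w)
    (hkw : (G.deleteEdges {s(v, w)}).Reachable k w) :
    ¬(G.deleteEdges {s(v, w)}).Reachable v k := fun hvk =>
  isBridge_iff.mp (isAcyclic_iff_forall_adj_isBridge.mp hG hvw) (hvk.trans hkw)

theorem IsAcyclic.deleteEdges_sup_edge (hG : G.IsAcyclic) (hvw : G.Adj v w)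
    (hkw : (G.deleteEdges {s(v, w)}).Reachable k w) :
    (G.deleteEdges {s(v, w)} ⊔ edge v k).IsAcyclic :=
  (hG.anti (deleteEdges_le _)).sup_edge_of_not_reachable (hG.not_reachable_deleteEdges hvw hkw)

theorem reachable_le_deleteEdges_sup_edge (hkw : (G.deleteEdges {s(v, w)}).Reachable k w) :
    G.Reachable ≤ (G.deleteEdges {s(v, w)} ⊔ edge v k).Reachable := by
  refine reachable_le_of_adj_le_reachable fun a b hab => ?_
  by_cases he : s(a, b) = s(v, w)
  · have hvw : (G.deleteEdges {s(v, w)} ⊔ edge v k).Reachable v w :=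
      ((reachable_edge v k).mono le_sup_right).trans (hkw.mono le_sup_left)
    rcases Sym2.eq_iff.mp he with ⟨rfl, rfl⟩ | ⟨rfl, rfl⟩
    exacts [hvw, hvw.symm]
  · exact Adj.reachable (Or.inl (by simpa [he] using hab))

section Finset

variable [DecidableEq α] {T : Finset (Sym2 α)}

theorem fromEdgeSet_erase (e : Sym2 α) :
    fromEdgeSet (↑(T.erase e) : Set (Sym2 α)) = (fromEdgeSet ↑T).deleteEdges {e} := by
  simp [deleteEdges]

theorem fromEdgeSet_insert_erase (e : Sym2 α) :
    fromEdgeSet (↑(insert s(v, k) (T.erase e)) : Set (Sym2 α)) =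
      (fromEdgeSet ↑T).deleteEdges {e} ⊔ edge v k := by
  rw [Finset.coe_insert, Set.insert_eq, fromEdgeSet_union, fromEdgeSet_erase, sup_comm]
  rfl

theorem _root_.ConnIn.erase_or (h : ConnIn T a v) (w : α) :
    ConnIn (T.erase s(v, w)) a v ∨ ConnIn (T.erase s(v, w)) a w := by
  simpa only [ConnIn, fromEdgeSet_erase] using h.deleteEdges_or w

end Finset

end SimpleGraph

open SimpleGraph

section TreeExchange

variable {T : Finset (Sym2 V)} {v w k : V}

theorem mem_edgeVerts : v ∈ edgeVerts T ↔ ∃ e ∈ T, v ∈ e := by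
  simp [edgeVerts]

theorem mem_edgeVerts_of_adj (h : (fromEdgeSet (T : Set (Sym2 V))).Adj v w) :
    v ∈ edgeVerts T :=
  mem_edgeVerts.mpr ⟨s(v, w), ((fromEdgeSet_adj _).mp h).1, Sym2.mem_mk_left v w⟩

theorem mem_edgeVerts_of_connIn (h : ConnIn T k w) (hwk : w ≠ k) : w ∈ edgeVerts T :=
  let ⟨_, hu⟩ := Reachable.nonempty_neighborSet_right hwk.symm h
  mem_edgeVerts_of_adj hu

theorem edgeVerts_insert : edgeVerts (insert s(v, w) T) = insert v (insert w (edgeVerts T)) := by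
  ext x
  simp [mem_edgeVerts, or_assoc]

theorem edgeVerts_insert_erase_of_connIn (he : s(v, w) ∈ T) (hwk : w ≠ k)
    (hkw : ConnIn (T.erase s(v, w)) k w) :
    edgeVerts (insert s(v, k) (T.erase s(v, w))) = edgeVerts T := by
  conv_rhs => rw [← Finset.insert_erase he]
  rw [edgeVerts_insert, edgeVerts_insert,
    Finset.insert_eq_of_mem (mem_edgeVerts_of_connIn hkw.symm hwk.symm),
    Finset.insert_eq_of_mem (mem_edgeVerts_of_connIn hkw hwk)]

variable {G : SimpleGraph V}

theorem IsTreeSubgraph.adj_of_mem (hT : IsTreeSubgraph G T) (he : s(v, w) ∈ T) :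
    (fromEdgeSet (T : Set (Sym2 V))).Adj v w :=
  (fromEdgeSet_adj _).mpr ⟨he, G.ne_of_adj (hT.1 he)⟩

theorem IsTreeSubgraph.notMem_erase_of_connIn (hT : IsTreeSubgraph G T) (he : s(v, w) ∈ T)
    (hvk : v ≠ k) (hkw : ConnIn (T.erase s(v, w)) k w) : s(v, k) ∉ T.erase s(v, w) := by
  intro hf
  rw [ConnIn, fromEdgeSet_erase] at hkw
  refine hT.2.2.2.not_reachable_deleteEdges (hT.adj_of_mem he) hkw ?_
  rw [← fromEdgeSet_erase]
  exact Adj.reachable ((fromEdgeSet_adj _).mpr ⟨hf, hvk⟩)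

theorem IsTreeSubgraph.exchange (hT : IsTreeSubgraph G T) (he : s(v, w) ∈ T)
    (hf : s(v, k) ∈ G.edgeSet) (hwk : w ≠ k) (hkw : ConnIn (T.erase s(v, w)) k w) :
    IsTreeSubgraph G (insert s(v, k) (T.erase s(v, w))) := by
  have hkw' := hkw
  rw [ConnIn, fromEdgeSet_erase] at hkw'
  refine ⟨?_, ⟨_, Finset.mem_insert_self _ _⟩, fun a ha b hb => ?_, ?_⟩
  · rw [Finset.coe_insert, Set.insert_subset_iff]
    exact ⟨hf, (Finset.coe_subset.mpr (Finset.erase_subset _ _)).trans hT.1⟩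
  · rw [edgeVerts_insert_erase_of_connIn he hwk hkw] at ha hb
    rw [ConnIn, fromEdgeSet_insert_erase]
    exact reachable_le_deleteEdges_sup_edge hkw' _ _ (hT.2.2.1 a ha b hb)
  · rw [fromEdgeSet_insert_erase]
    exact hT.2.2.2.deleteEdges_sup_edge (hT.adj_of_mem he) hkw'

end TreeExchange

section Optimality

variable (I : BPCCSPInstance V)

def IsMinCostOptimalTree (T : Finset (Sym2 V)) : Prop :=
  IsOptimalTree I T ∧ ∀ T', IsOptimalTree I T' → ∑ e ∈ T, I.len e ≤ ∑ e ∈ T', I.len e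

theorem exists_isOptimalTree (h : ∃ T, IsFeasibleTree I T) : ∃ T, IsOptimalTree I T := by
  classical
  obtain ⟨T, hT, hmax⟩ := Finset.exists_max_image (Finset.univ.filter (IsFeasibleTree I))
    (fun T => collectedPrize I (edgeVerts T)) (by simpa [Finset.Nonempty] using h)
  exact ⟨T, (Finset.mem_filter.mp hT).2, fun T' hT' => hmax T' (by simpa using hT')⟩

theorem exists_isMinCostOptimalTree (h : ∃ T, IsFeasibleTree I T) :
    ∃ T, IsMinCostOptimalTree I T := by
  classical
  obtain ⟨T, hT, hmin⟩ := Finset.exists_min_image (Finset.univ.filter (IsOptimalTree I))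
    (fun T => ∑ e ∈ T, I.len e) (by simpa [Finset.Nonempty] using exists_isOptimalTree I h)
  exact ⟨T, (Finset.mem_filter.mp hT).2, fun T' hT' => hmin T' (by simpa using hT')⟩

variable {I} {T T' : Finset (Sym2 V)} {v w k : V}

theorem IsOptimalTree.of_edgeVerts_eq (hT : IsOptimalTree I T) (hT' : IsTreeSubgraph I.G T')
    (hV : edgeVerts T' = edgeVerts T) (hc : ∑ e ∈ T', I.len e ≤ ∑ e ∈ T, I.len e) :
    IsOptimalTree I T' :=
  ⟨⟨hT', hV ▸ hT.1.2.1, hc.trans hT.1.2.2⟩, fun T'' h => hV ▸ hT.2 T'' h⟩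

theorem IsMinCostOptimalTree.len_le_of_exchange (hT : IsMinCostOptimalTree I T)
    (he : s(v, w) ∈ T) (hf : s(v, k) ∈ I.G.edgeSet) (hwk : w ≠ k)
    (hkw : ConnIn (T.erase s(v, w)) k w) : I.len s(v, w) ≤ I.len s(v, k) := by
  have htree := hT.1.1.1
  have hcost : ∑ e ∈ insert s(v, k) (T.erase s(v, w)), I.len e =
      ∑ e ∈ T, I.len e - I.len s(v, w) + I.len s(v, k) := by
    rw [Finset.sum_insert (htree.notMem_erase_of_connIn he (I.G.ne_of_adj hf) hkw),
      Finset.sum_erase_eq_sub he]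
    ring
  by_contra! hlt
  have hopt := hT.1.of_edgeVerts_eq (htree.exchange he hf hwk hkw)
    (edgeVerts_insert_erase_of_connIn he hwk hkw) (by linarith)
  linarith [hT.2 _ hopt]

end Optimality

/-- Validity of the tree symmetry-breaking inequalities: if some feasible tree exists,
there is an optimal tree T* such that for every three distinct visited vertices v, w, k
forming a triangle in G with {v, w} strictly most expensive, the edge {v, w} is not in T*. -/
theorem tree_bpccsp_symmetry_breaking_valid
    (I : BPCCSPInstance V) (hfeas : ∃ T : Finset (Sym2 V), IsFeasibleTree I T) :
    ∃ T' : Finset (Sym2 V), IsOptimalTree I T' ∧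
      ∀ v w k : V, v ≠ w → v ≠ k → w ≠ k →
        v ∈ edgeVerts T' → w ∈ edgeVerts T' → k ∈ edgeVerts T' →
        s(v, w) ∈ I.G.edgeSet → s(v, k) ∈ I.G.edgeSet → s(w, k) ∈ I.G.edgeSet →
        I.len s(v, k) < I.len s(v, w) → I.len s(w, k) < I.len s(v, w) →
        s(v, w) ∉ T' := by
  obtain ⟨T, hT⟩ := exists_isMinCostOptimalTree I hfeas
  refine ⟨T, hT.1, fun v w k _ hvk hwk hv _ hk _ hGvk hGwk hlvk hlwk he => ?_⟩
  have hconn : ConnIn T k v := hT.1.1.1.2.2.1 k hk v hv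
  rcases hconn.erase_or w with hkv | hkw
  · have hle := hT.len_le_of_exchange (by rwa [Sym2.eq_swap]) hGwk hvk (by rwa [Sym2.eq_swap])
    rw [Sym2.eq_swap] at hle
    linarith
  · linarith [hT.len_le_of_exchange he hGvk hwk hkw]
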